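/- For every integer k ≥ 0, the square of the tree L(k) satisfies lmw(L(k)²) = k = lmw(L(k)). -/

import Mathlib

open scoped Classical

noncomputable section

namespace LMW

variable {V : Type*} [Fintype V]

/-- The bipartite graph `G[Vᵢ, V̄ᵢ]` consisting of the edges of `G` crossing the cut at
position `i` of the linear layout `σ` (here `Vᵢ` is the set of the first `i` vertices
in the layout). -/
def cutGraph (G : SimpleGraph V) (σ : V ≃ Fin (Fintype.card V)) (i : ℕ) : SimpleGraph V where
  Adj u v := G.Adj u v ∧
    (((σ u : ℕ) < i ∧ i ≤ (σ v : ℕ)) ∨ ((σ v : ℕ) < i ∧ i ≤ (σ u : ℕ)))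
  symm := by
    constructor
    intro u v h
    exact ⟨h.1.symm, h.2.symm⟩
  loopless := by
    constructor
    intro u h
    exact G.irrefl h.1

/-- `M` is an induced matching in `H`: a set of edges of `H` such that any two distinct
edges of `M` share no endpoint and no endpoint of one is adjacent in `H` to an endpoint
of the other. -/
def IsInducedMatching (H : SimpleGraph V) (M : Finset (Sym2 V)) : Prop :=
  (↑M : Set (Sym2 V)) ⊆ H.edgeSet ∧
    ∀ e ∈ M, ∀ f ∈ M, e ≠ f → ∀ u ∈ e, ∀ v ∈ f, u ≠ v ∧ ¬ H.Adj u v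

/-- `mim H` is the size of a maximum induced matching of `H`. -/
def mim (H : SimpleGraph V) : ℕ :=
  sSup {n : ℕ | ∃ M : Finset (Sym2 V), IsInducedMatching H M ∧ M.card = n}

/-- The MIM-width of `G` under the linear layout `σ`: the maximum over all cuts
`1 ≤ i < |V|` of the size of a maximum induced matching of the cut graph. -/
def mw (G : SimpleGraph V) (σ : V ≃ Fin (Fintype.card V)) : ℕ :=
  (Finset.Ico 1 (Fintype.card V)).sup fun i => mim (cutGraph G σ i)

/-- The linear MIM-width of `G`: the minimum of `mw G σ` over all linear layouts `σ`. -/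
def lmw (G : SimpleGraph V) : ℕ :=
  sInf {m : ℕ | ∃ σ : V ≃ Fin (Fintype.card V), mw G σ = m}

/-- The `m`-th power of a graph: two distinct vertices are adjacent iff their distance
in `G` is at most `m`. -/
def graphPow (G : SimpleGraph V) (m : ℕ) : SimpleGraph V where
  Adj u v := u ≠ v ∧ G.edist u v ≤ m
  symm := by
    constructor
    intro u v h
    refine ⟨h.1.symm, ?_⟩
    rw [SimpleGraph.edist_comm]
    exact h.2
  loopless := by
    constructor
    intro u h
    exact h.1 rfl

/-- Vertex type of the tree `L k`:  `L 0` is a single vertex; `L (k+1)` consists of a root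
`u = Sum.inl ()`, three children `vᵢ = Sum.inr (i, Sum.inl ())` and, below each `vᵢ`, a copy
of `L k` whose vertices are `Sum.inr (i, Sum.inr a)`. -/
def LV : ℕ → Type
  | 0 => Unit
  | k + 1 => Unit ⊕ (Fin 3 × (Unit ⊕ LV k))

instance instDecEqLV : ∀ k, DecidableEq (LV k)
  | 0 => inferInstanceAs (DecidableEq Unit)
  | k + 1 =>
    letI := instDecEqLV k
    inferInstanceAs (DecidableEq (Unit ⊕ (Fin 3 × (Unit ⊕ LV k))))

instance instFintypeLV : ∀ k, Fintype (LV k)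
  | 0 => inferInstanceAs (Fintype Unit)
  | k + 1 =>
    letI := instFintypeLV k
    inferInstanceAs (Fintype (Unit ⊕ (Fin 3 × (Unit ⊕ LV k))))

/-- The root of `L k`. -/
def Lroot : ∀ k, LV k
  | 0 => ()
  | _ + 1 => Sum.inl ()

/-- The tree `L k`: the root `u` is adjacent to the three children `vᵢ`, each child `vᵢ` is
adjacent to the root of the `i`-th copy of `L k`, and within each copy the edges are those
of `L k`. -/
def Lgraph : ∀ k, SimpleGraph (LV k)
  | 0 => ⊥
  | k + 1 => SimpleGraph.fromRel (fun x y : LV (k + 1) =>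
      (∃ i : Fin 3, x = Sum.inl () ∧ y = Sum.inr (i, Sum.inl ())) ∨
      (∃ i : Fin 3, x = Sum.inr (i, Sum.inl ()) ∧ y = Sum.inr (i, Sum.inr (Lroot k))) ∨
      (∃ (i : Fin 3) (a b : LV k), x = Sum.inr (i, Sum.inr a) ∧ y = Sum.inr (i, Sum.inr b) ∧
        (Lgraph k).Adj a b))


/-!
Induction on `k`. `L (k + 1)` consists of three copies of `L k` whose roots hang, through stems
`vᵢ`, from a new root `u`; its square consists of three copies of `(L k)²` glued in the same way,
plus a few extra edges around `u` and the `vᵢ`. The argument works for both gluings at once.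

Upper bound: lay out `u`, copy 0, `v₀`, copy 1, `v₁`, `v₂`, copy 2, each copy by an optimal layout
starting at its root. A cut then splits at most one copy, which contributes at most `k` edges to an
induced matching, and any two of the remaining crossing edges share an endpoint or are joined by a
crossing edge, so at most one of them is used.

Lower bound: in any layout each copy has a cut carrying an induced matching of size `k` inside
that copy. At the middle one of these three cuts the other two copies have vertices on both
sides, and a path joining them outside the closed neighbourhood of the middle copy crosses the cut
along an edge that extends the matching.
-/

variable {α β : Type*}

section InducedMatching

variable {H : SimpleGraph α} {M : Finset (Sym2 α)}

lemma isInducedMatching_empty (H : SimpleGraph α) : IsInducedMatching H ∅ := by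
  simp [IsInducedMatching]

lemma mim_le {m : ℕ} (h : ∀ M, IsInducedMatching H M → M.card ≤ m) : mim H ≤ m :=
  csSup_le ⟨0, ∅, isInducedMatching_empty H, rfl⟩ (by rintro _ ⟨M, hM, rfl⟩; exact h M hM)

lemma mim_bot : mim (⊥ : SimpleGraph α) = 0 := by
  refine Nat.eq_zero_of_le_zero (mim_le fun M hM => ?_)
  simpa [Finset.eq_empty_iff_forall_notMem] using fun e he => by simpa using hM.1 he

lemma IsInducedMatching.insert [DecidableEq α] {x y : α} (hM : IsInducedMatching H M)
    (hxy : H.Adj x y) (hfar : ∀ e ∈ M, ∀ z ∈ e, ∀ w ∈ s(x, y), w ≠ z ∧ ¬H.Adj w z) :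
    IsInducedMatching H (insert s(x, y) M) := by
  refine ⟨?_, ?_⟩
  · simpa [Set.insert_subset_iff] using ⟨hxy, hM.1⟩
  · simp only [Finset.mem_insert]
    rintro e (rfl | he) f (rfl | hf) hef u hu v hv
    · exact absurd rfl hef
    · exact hfar f hf v hv u hu
    · exact (hfar e he u hu v hv).imp Ne.symm fun h h' => h h'.symm
    · exact hM.2 e he f hf hef u hu v hv

lemma IsInducedMatching.map {G : SimpleGraph β} {M : Finset (Sym2 β)} (f : G ↪g H)
    (hM : IsInducedMatching G M) : IsInducedMatching H (M.image (Sym2.map f)) := by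
  refine ⟨?_, ?_⟩
  · intro e' he'
    obtain ⟨e, he, rfl⟩ := Finset.mem_image.1 (Finset.mem_coe.1 he')
    induction e using Sym2.ind with
    | _ a b => simpa using hM.1 he
  · simp only [Finset.mem_image]
    rintro _ ⟨e, he, rfl⟩ _ ⟨e', he', rfl⟩ hne u hu v hv
    obtain ⟨a, ha, rfl⟩ := Sym2.mem_map.1 hu
    obtain ⟨b, hb, rfl⟩ := Sym2.mem_map.1 hv
    simpa using hM.2 e he e' he' (fun h => hne (h ▸ rfl)) a ha b hb

lemma IsInducedMatching.comap {G : SimpleGraph β} (f : G ↪g H) (hM : IsInducedMatching H M) :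
    IsInducedMatching G (M.preimage (Sym2.map f) (Sym2.map.injective f.injective).injOn) := by
  refine ⟨?_, ?_⟩
  · intro e he
    induction e using Sym2.ind with
    | _ a b => simpa using hM.1 (Finset.mem_preimage.1 he)
  · intro e he e' he' hne a ha b hb
    simpa using hM.2 _ (Finset.mem_preimage.1 he) _ (Finset.mem_preimage.1 he')
      (fun h => hne (Sym2.map.injective f.injective h)) (f a) (Sym2.mem_map.2 ⟨a, ha, rfl⟩)
      (f b) (Sym2.mem_map.2 ⟨b, hb, rfl⟩)

end InducedMatching

section Mim

variable {H : SimpleGraph V} {M : Finset (Sym2 V)}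

lemma bddAbove_card_isInducedMatching (H : SimpleGraph V) :
    BddAbove {n | ∃ M, IsInducedMatching H M ∧ M.card = n} :=
  ⟨Fintype.card (Sym2 V), by rintro _ ⟨M, -, rfl⟩; exact M.card_le_univ⟩

lemma IsInducedMatching.card_le_mim (hM : IsInducedMatching H M) : M.card ≤ mim H :=
  le_csSup (bddAbove_card_isInducedMatching H) ⟨M, hM, rfl⟩

lemma exists_isInducedMatching_card_eq_mim (H : SimpleGraph V) :
    ∃ M, IsInducedMatching H M ∧ M.card = mim H :=
  Nat.sSup_mem (s := {n | ∃ M, IsInducedMatching H M ∧ M.card = n})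
    ⟨0, ∅, isInducedMatching_empty H, rfl⟩ (bddAbove_card_isInducedMatching H)

end Mim

section Cut

/-- `cutGraph G σ i` is `cutAt G (σ ·) i`; other keys let a cut be transported along any map that
preserves the order of the keys. -/
def cutAt (G : SimpleGraph α) (π : α → ℕ) (p : ℕ) : SimpleGraph α where
  Adj u v := G.Adj u v ∧ ((π u < p ∧ p ≤ π v) ∨ (π v < p ∧ p ≤ π u))
  symm := ⟨fun _ _ h => ⟨h.1.symm, h.2.symm⟩⟩
  loopless := ⟨fun _ h => G.irrefl h.1⟩

variable {G : SimpleGraph α} {π : α → ℕ} {p : ℕ}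

lemma cutAt_congr {π' : α → ℕ} {p' : ℕ} (h : ∀ a, π a < p ↔ π' a < p') :
    cutAt G π p = cutAt G π' p' := by
  ext u v
  simp only [cutAt, ← not_lt, h]

def cutAtEmbedding {H : SimpleGraph β} {π' : β → ℕ} {p' : ℕ} (f : G ↪g H)
    (h : ∀ a, π a < p ↔ π' (f a) < p') : cutAt G π p ↪g cutAt H π' p' where
  toEmbedding := f.toEmbedding
  map_rel_iff' {a b} := by
    simp only [cutAt, ← not_lt, h]
    simp

lemma exists_eq_of_mem_edgeSet_cutAt {e : Sym2 α} (he : e ∈ (cutAt G π p).edgeSet) :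
    ∃ x y, e = s(x, y) ∧ G.Adj x y ∧ π x < p ∧ p ≤ π y := by
  induction e using Sym2.ind with
  | _ x y =>
    obtain ⟨hxy, ⟨hx, hy⟩ | ⟨hy, hx⟩⟩ := he
    · exact ⟨x, y, rfl, hxy, hx, hy⟩
    · exact ⟨y, x, Sym2.eq_swap, hxy.symm, hy, hx⟩

lemma IsInducedMatching.eq_of_cutAt {M : Finset (Sym2 α)} (hM : IsInducedMatching (cutAt G π p) M)
    {x y x' y' : α} (he : s(x, y) ∈ M) (he' : s(x', y') ∈ M) (hx : π x < p) (hy : p ≤ π y)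
    (hx' : π x' < p) (hy' : p ≤ π y')
    (h : x = x' ∨ y = y' ∨ G.Adj x y' ∨ G.Adj x' y) : s(x, y) = s(x', y') := by
  by_contra hne
  have hM := hM.2 _ he _ he' hne
  rcases h with rfl | rfl | h | h
  · exact (hM x (by simp) x (by simp)).1 rfl
  · exact (hM y (by simp) y (by simp)).1 rfl
  · exact (hM x (by simp) y' (by simp)).2 ⟨h, Or.inl ⟨hx, hy'⟩⟩
  · exact (hM y (by simp) x' (by simp)).2 ⟨h.symm, Or.inr ⟨hx', hy⟩⟩

lemma _root_.SimpleGraph.Walk.exists_adj_cross {x y : α} (w : G.Walk x y) (hx : π x < p)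
    (hy : p ≤ π y) : ∃ a b, G.Adj a b ∧ π a < p ∧ p ≤ π b := by
  induction w with
  | nil => omega
  | @cons x z y hxz _ ih =>
    by_cases hz : π z < p
    · exact ih hz hy
    · exact ⟨x, z, hxz, hx, not_lt.1 hz⟩

end Cut

section Layout

variable {G : SimpleGraph V} {σ : V ≃ Fin (Fintype.card V)}

lemma mim_cutGraph_le_mw (G : SimpleGraph V) (σ : V ≃ Fin (Fintype.card V)) (i : ℕ) :
    mim (cutGraph G σ i) ≤ mw G σ := by
  by_cases hi : i ∈ Finset.Ico 1 (Fintype.card V)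
  · exact Finset.le_sup (f := fun i => mim (cutGraph G σ i)) hi
  · have hbot : cutGraph G σ i = ⊥ := by
      ext u v
      have := (σ u).is_lt
      have := (σ v).is_lt
      simp only [cutGraph, SimpleGraph.bot_adj, iff_false, Finset.mem_Ico] at hi ⊢
      omega
    simp [hbot, mim_bot]

lemma mw_le {m : ℕ} (h : ∀ i, mim (cutGraph G σ i) ≤ m) : mw G σ ≤ m :=
  Finset.sup_le fun i _ => h i

lemma exists_le_mim_cutGraph {k : ℕ} (hk : 0 < k) (h : k ≤ mw G σ) :
    ∃ i, k ≤ mim (cutGraph G σ i) := by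
  obtain ⟨i, -, hi⟩ := (Finset.le_sup_iff hk).1 h
  exact ⟨i, hi⟩

lemma lmw_le_mw (G : SimpleGraph V) (σ : V ≃ Fin (Fintype.card V)) : lmw G ≤ mw G σ :=
  csInf_le (OrderBot.bddBelow _) ⟨σ, rfl⟩

lemma le_lmw {k : ℕ} (h : ∀ σ : V ≃ Fin (Fintype.card V), k ≤ mw G σ) : k ≤ lmw G :=
  le_csInf ⟨_, Fintype.equivFin V, rfl⟩ (by rintro _ ⟨σ, rfl⟩; exact h σ)

lemma exists_equiv_fin_lt_iff (π : V → ℕ) (hπ : Function.Injective π) :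
    ∃ τ : V ≃ Fin (Fintype.card V), ∀ a b, (τ a : ℕ) < τ b ↔ π a < π b := by
  let := LinearOrder.lift' π hπ
  exact ⟨(Fintype.orderIsoFinOfCardEq V rfl).symm.toEquiv,
    fun a b => (Fintype.orderIsoFinOfCardEq V rfl).symm.lt_iff_lt⟩

variable {τ : V ≃ Fin (Fintype.card V)} {π : V → ℕ}

lemma exists_cutGraph_eq_cutAt (hτ : ∀ a b, (τ a : ℕ) < τ b ↔ π a < π b) (i : ℕ) :
    ∃ p, cutGraph G τ i = cutAt G π p := by
  by_cases hi : i < Fintype.card V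
  · refine ⟨π (τ.symm ⟨i, hi⟩), cutAt_congr fun a => ?_⟩
    simpa using hτ a (τ.symm ⟨i, hi⟩)
  · refine ⟨Finset.univ.sup π + 1, cutAt_congr fun a => ?_⟩
    have := (τ a).is_lt
    have := Finset.le_sup (f := π) (Finset.mem_univ a)
    omega

lemma val_eq_zero_of_forall_lt (hτ : ∀ a b, (τ a : ℕ) < τ b ↔ π a < π b) {a : V}
    (ha : ∀ b, b ≠ a → π a < π b) : (τ a : ℕ) = 0 := by
  by_contra h
  have hb := τ.apply_symm_apply ⟨0, (τ a).pos⟩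
  have := (hτ a _).2 (ha _ fun hba => h (by rw [← hba, hb]))
  rw [hb] at this
  exact Nat.not_lt_zero _ this

end Layout

section Rooted

variable {G : SimpleGraph V} {r : V} {k : ℕ}

/-- The root-first optimal layout is what the induction step extends. -/
def HasRootedLmw (G : SimpleGraph V) (r : V) (k : ℕ) : Prop :=
  (∃ σ : V ≃ Fin (Fintype.card V), (σ r : ℕ) = 0 ∧ mw G σ ≤ k) ∧
    ∀ σ : V ≃ Fin (Fintype.card V), k ≤ mw G σ

lemma HasRootedLmw.lmw_eq (h : HasRootedLmw G r k) : lmw G = k := by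
  obtain ⟨⟨σ, -, hσ⟩, hlow⟩ := h
  exact le_antisymm ((lmw_le_mw G σ).trans hσ) (le_lmw hlow)

lemma hasRootedLmw_of_card_eq_one (hV : Fintype.card V = 1) (G : SimpleGraph V) (r : V) :
    HasRootedLmw G r 0 := by
  refine ⟨⟨Fintype.equivFin V, ?_, ?_⟩, fun _ => Nat.zero_le _⟩
  · have := (Fintype.equivFin V r).is_lt
    omega
  · simp [mw, hV]

end Rooted

section LowerBound

variable {W : Type*} [Fintype W] {G : SimpleGraph V} {σ : V ≃ Fin (Fintype.card V)} {k : ℕ}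

lemma one_le_mw (hG : G.Preconnected) (hV : 2 ≤ Fintype.card V) (σ : V ≃ Fin (Fintype.card V)) :
    1 ≤ mw G σ := by
  obtain ⟨w⟩ := hG (σ.symm ⟨0, by omega⟩) (σ.symm ⟨Fintype.card V - 1, by omega⟩)
  obtain ⟨a, b, hab, ha, hb⟩ := w.exists_adj_cross (π := fun v => σ v) (p := 1)
    (by simp) (by simp; omega)
  have := ((isInducedMatching_empty _).insert (H := cutGraph G σ 1) ⟨hab, Or.inl ⟨ha, hb⟩⟩
    (by simp)).card_le_mim
  exact le_trans (by simpa using this) (mim_cutGraph_le_mw G σ 1)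

lemma exists_cut_isInducedMatching_of_embedding {H : SimpleGraph W} (f : H ↪g G) (hk : 0 < k)
    (hH : ∀ τ : W ≃ Fin (Fintype.card W), k ≤ mw H τ) (σ : V ≃ Fin (Fintype.card V)) :
    ∃ p M, IsInducedMatching (cutGraph G σ p) M ∧ k ≤ M.card ∧
      ∀ e ∈ M, ∀ z ∈ e, z ∈ Set.range f := by
  obtain ⟨τ, hτ⟩ := exists_equiv_fin_lt_iff (fun a => (σ (f a) : ℕ))
    (fun a b h => f.injective (σ.injective (Fin.val_injective h)))
  obtain ⟨j, hj⟩ := exists_le_mim_cutGraph hk (hH τ)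
  obtain ⟨p, hp⟩ := exists_cutGraph_eq_cutAt (G := H) hτ j
  obtain ⟨N, hN, hNcard⟩ := exists_isInducedMatching_card_eq_mim (cutGraph H τ j)
  rw [hp] at hN
  refine ⟨p, _, hN.map (cutAtEmbedding (π' := fun v => (σ v : ℕ)) f fun _ => Iff.rfl), ?_, ?_⟩
  · rw [Finset.card_image_of_injective _ (Sym2.map.injective (RelEmbedding.injective _))]
    omega
  · simp only [Finset.mem_image]
    rintro _ ⟨e, -, rfl⟩ z hz
    obtain ⟨a, -, rfl⟩ := Sym2.mem_map.1 hz
    exact ⟨a, rfl⟩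

lemma exists_mem_cross_of_card_pos {M : Finset (Sym2 V)} {p : ℕ}
    (hM : IsInducedMatching (cutGraph G σ p) M) (hpos : 0 < M.card) :
    ∃ x y, s(x, y) ∈ M ∧ (σ x : ℕ) < p ∧ p ≤ σ y := by
  obtain ⟨e, he⟩ := Finset.card_pos.1 hpos
  obtain ⟨x, y, rfl, -, hx, hy⟩ := exists_eq_of_mem_edgeSet_cutAt (hM.1 he)
  exact ⟨x, y, he, hx, hy⟩

end LowerBound

abbrev Tri (α : Type*) := Unit ⊕ (Fin 3 × (Unit ⊕ α))

abbrev hub : Tri α := Sum.inl ()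

abbrev stem (i : Fin 3) : Tri α := Sum.inr (i, Sum.inl ())

abbrev copyV (i : Fin 3) (a : α) : Tri α := Sum.inr (i, Sum.inr a)

lemma copyV_injective (i : Fin 3) : Function.Injective (copyV (α := α) i) :=
  fun _ _ h => by simpa using h

lemma card_tri {W : Type*} [Fintype W] : Fintype.card (Tri W) = 3 * Fintype.card W + 4 := by
  simp only [Fintype.card_sum, Fintype.card_prod, Fintype.card_unit, Fintype.card_fin]
  ring

structure IsTripleJoin (H : SimpleGraph α) (G : SimpleGraph (Tri α)) (r : α) (B : α → Prop)
    (sq : Prop) : Prop where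
  adj_hub_stem : ∀ i, G.Adj hub (stem i)
  adj_stem_stem : ∀ i j, G.Adj (stem i) (stem j) ↔ sq ∧ i ≠ j
  adj_hub_copyV : ∀ i a, G.Adj hub (copyV i a) ↔ sq ∧ a = r
  adj_stem_copyV : ∀ i j a, G.Adj (stem i) (copyV j a) ↔ i = j ∧ B a
  adj_copyV_copyV : ∀ i j a b, G.Adj (copyV i a) (copyV j b) ↔ i = j ∧ H.Adj a b
  root_mem : B r

namespace IsTripleJoin

variable {H : SimpleGraph α} {G : SimpleGraph (Tri α)} {r : α} {B : α → Prop} {sq : Prop}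

lemma adj_stem_hub (F : IsTripleJoin H G r B sq) (i : Fin 3) : G.Adj (stem i) hub :=
  (F.adj_hub_stem i).symm

lemma adj_copyV_hub (F : IsTripleJoin H G r B sq) (i : Fin 3) (a : α) :
    G.Adj (copyV i a) hub ↔ sq ∧ a = r :=
  G.adj_comm _ _ |>.trans (F.adj_hub_copyV i a)

lemma adj_copyV_stem (F : IsTripleJoin H G r B sq) (i j : Fin 3) (a : α) :
    G.Adj (copyV i a) (stem j) ↔ j = i ∧ B a :=
  G.adj_comm _ _ |>.trans (F.adj_stem_copyV j i a)

def copyEmbedding (F : IsTripleJoin H G r B sq) (i : Fin 3) : H ↪g G where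
  toFun := copyV i
  inj' := copyV_injective i
  map_rel_iff' := by simp [F.adj_copyV_copyV]

lemma adj_cases (F : IsTripleJoin H G r B sq) {x y : Tri α} (hxy : G.Adj x y) (hy : y ≠ hub)
    (hc : ¬ ∃ i a b, x = copyV i a ∧ y = copyV i b) :
    (x = hub ∧ ∃ t, y = stem t) ∨ (sq ∧ x = hub ∧ ∃ t, y = copyV t r) ∨
      (sq ∧ ∃ t t', x = stem t ∧ y = stem t') ∨ (∃ t a, B a ∧ x = stem t ∧ y = copyV t a) ∨
      (∃ t a, B a ∧ x = copyV t a ∧ y = stem t) := by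
  rcases x with _ | ⟨i, _ | a⟩ <;> rcases y with _ | ⟨j, _ | b⟩
  all_goals simp_all [F.adj_hub_stem, F.adj_stem_stem, F.adj_hub_copyV, F.adj_stem_copyV,
    F.adj_copyV_copyV, F.adj_copyV_stem]

lemma preconnected (F : IsTripleJoin H G r B sq) (hH : H.Preconnected) : G.Preconnected := by
  have hhub : ∀ x, G.Reachable hub x := by
    rintro (⟨⟨⟩⟩ | ⟨i, ⟨⟨⟩⟩ | a⟩)
    · rfl
    · exact (F.adj_hub_stem i).reachable
    · exact (F.adj_hub_stem i).reachable.trans <|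
        ((F.adj_stem_copyV i i r).2 ⟨rfl, F.root_mem⟩).reachable.trans <|
        (hH r a).map (F.copyEmbedding i).toHom
  exact fun x y => (hhub x).symm.trans (hhub y)

lemma exists_adj_cross_avoiding (F : IsTripleJoin H G r B sq) (hH : H.Preconnected)
    {i j l : Fin 3} (hij : i ≠ j) (hlj : l ≠ j) (hil : i ≠ l) {π : Tri α → ℕ} {p : ℕ} {a c : α}
    (ha : π (copyV i a) < p) (hc : p ≤ π (copyV l c)) :
    ∃ x y, G.Adj x y ∧ π x < p ∧ p ≤ π y ∧
      ∀ w, ∀ z ∈ s(x, y), z ≠ copyV j w ∧ ¬G.Adj z (copyV j w) := by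
  set S : Set (Tri α) := {z | ∀ w, z ≠ copyV j w ∧ ¬G.Adj z (copyV j w)}
  have hcopy : ∀ t, t ≠ j → ∀ a, copyV t a ∈ S := fun t ht a w => by
    simp [F.adj_copyV_copyV, ht]
  have hstem : ∀ t, t ≠ j → stem t ∈ S := fun t ht w => by simp [F.adj_stem_copyV, ht]
  let K := G.induce S
  have hK : ∀ t (ht : t ≠ j) a, K.Reachable ⟨copyV t a, hcopy t ht a⟩ ⟨stem t, hstem t ht⟩ := by
    intro t ht a
    let φ : H →g K :=
      ⟨fun b => ⟨copyV t b, hcopy t ht b⟩, fun h => (F.adj_copyV_copyV t t _ _).2 ⟨rfl, h⟩⟩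
    exact ((hH a r).map φ).trans <| SimpleGraph.Adj.reachable (G := K)
      (u := φ r) ((F.adj_copyV_stem t t r).2 ⟨rfl, F.root_mem⟩)
  have hstems : K.Reachable ⟨stem i, hstem i hij⟩ ⟨stem l, hstem l hlj⟩ := by
    by_cases hsq : sq
    · exact SimpleGraph.Adj.reachable <| (F.adj_stem_stem i l).2 ⟨hsq, hil⟩
    · have hhub : hub ∈ S := fun w => by simp [F.adj_hub_copyV, hsq]
      exact (SimpleGraph.Adj.reachable (G := K) (u := ⟨stem i, hstem i hij⟩) (v := ⟨hub, hhub⟩)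
        (F.adj_stem_hub i)).trans (SimpleGraph.Adj.reachable (G := K) (F.adj_hub_stem l))
  obtain ⟨w⟩ := ((hK i hij a).trans hstems).trans (hK l hlj c).symm
  obtain ⟨⟨x, hx⟩, ⟨y, hy⟩, hxy, hpx, hpy⟩ := w.exists_adj_cross (π := fun z : S => π z) ha hc
  refine ⟨x, y, hxy, hpx, hpy, fun w z hz => ?_⟩
  rcases Sym2.mem_iff.1 hz with rfl | rfl
  exacts [hx w, hy w]

end IsTripleJoin

section Canonical

variable {W : Type*} [Fintype W]

def copyStart (n : ℕ) : Fin 3 → ℕ := ![1, n + 2, 2 * n + 4]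

def stemPos (n : ℕ) : Fin 3 → ℕ := ![n + 1, 2 * n + 2, 2 * n + 3]

/-- Positions in the order hub, copy 0, stem 0, copy 1, stem 1, stem 2, copy 2, each copy laid
out by `σ`. -/
def canonKey (σ : W ≃ Fin (Fintype.card W)) : Tri W → ℕ
  | Sum.inl _ => 0
  | Sum.inr (i, Sum.inl _) => stemPos (Fintype.card W) i
  | Sum.inr (i, Sum.inr a) => copyStart (Fintype.card W) i + σ a

variable (σ : W ≃ Fin (Fintype.card W))

@[simp] lemma canonKey_hub : canonKey σ hub = 0 := rfl

@[simp] lemma canonKey_stem (i : Fin 3) : canonKey σ (stem i) = stemPos (Fintype.card W) i := rfl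

@[simp] lemma canonKey_copyV (i : Fin 3) (a : W) :
    canonKey σ (copyV i a) = copyStart (Fintype.card W) i + σ a := rfl

lemma canonKey_injective : Function.Injective (canonKey σ) := by
  intro x y h
  rcases x with ⟨⟨⟩⟩ | ⟨i, ⟨⟨⟩⟩ | a⟩ <;> rcases y with ⟨⟨⟩⟩ | ⟨j, ⟨⟨⟩⟩ | b⟩ <;>
    (try have := (σ a).is_lt) <;> (try have := (σ b).is_lt) <;>
    (try fin_cases i) <;> (try fin_cases j) <;> simp_all [copyStart, stemPos, Fin.val_inj] <;> omega

lemma exists_layout_canonKey :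
    ∃ τ : Tri W ≃ Fin (Fintype.card (Tri W)), (τ hub : ℕ) = 0 ∧
      ∀ (G : SimpleGraph (Tri W)) i, ∃ p, cutGraph G τ i = cutAt G (canonKey σ) p := by
  obtain ⟨τ, hτ⟩ := exists_equiv_fin_lt_iff _ (canonKey_injective σ)
  refine ⟨τ, val_eq_zero_of_forall_lt hτ fun x hx => ?_, fun G => exists_cutGraph_eq_cutAt hτ⟩
  exact Nat.pos_of_ne_zero fun h => hx (canonKey_injective σ (h.trans (canonKey_hub σ).symm))

lemma stemPos_le (n : ℕ) (t : Fin 3) : stemPos n t ≤ 2 * n + 3 := by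
  fin_cases t <;> dsimp [stemPos] <;> omega

lemma eq_two_of_stemPos_lt {n p c : ℕ} {t : Fin 3} (h₁ : stemPos n t < p)
    (h₂ : p ≤ copyStart n t + c) (hc : c < n) : t = 2 ∧ 2 * n + 4 ≤ p := by
  fin_cases t <;> simp [stemPos, copyStart] at * <;> omega

lemma eq_two_of_le_copyStart {n p : ℕ} {t : Fin 3} (h₁ : 2 * n + 4 ≤ p)
    (h₂ : p ≤ copyStart n t) : t = 2 := by
  fin_cases t <;> simp [copyStart] at * <;> omega

lemma eq_of_copyStart_lt {n p c d : ℕ} {t s : Fin 3} (h₁ : copyStart n t + c < p)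
    (h₂ : p ≤ stemPos n t) (h₃ : copyStart n s + d < p) (h₄ : p ≤ stemPos n s) : t = s := by
  fin_cases t <;> fin_cases s <;> simp [stemPos, copyStart] at * <;> omega

def copyAt (n p : ℕ) : Fin 3 := if p ≤ n + 1 then 0 else if p ≤ 2 * n + 3 then 1 else 2

lemma eq_copyAt {n p c d : ℕ} {t : Fin 3} (h₁ : copyStart n t + c < p) (h₂ : p ≤ copyStart n t + d)
    (hd : d < n) : t = copyAt n p := by
  unfold copyAt
  fin_cases t <;> simp [copyStart] at h₁ h₂ <;> split_ifs <;> first | rfl | omega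

end Canonical

namespace IsTripleJoin

variable {W : Type*} [Fintype W] {H : SimpleGraph W} {G : SimpleGraph (Tri W)} {r : W}
  {B : W → Prop} {sq : Prop} {σ : W ≃ Fin (Fintype.card W)} {p k : ℕ}

lemma crossing_edges_conflict (F : IsTripleJoin H G r B sq) (hr : (σ r : ℕ) = 0)
    {x y x' y' : Tri W} (h : G.Adj x y) (h' : G.Adj x' y') (hx : canonKey σ x < p)
    (hy : p ≤ canonKey σ y) (hx' : canonKey σ x' < p) (hy' : p ≤ canonKey σ y')
    (hc : ¬ ∃ i a b, x = copyV i a ∧ y = copyV i b)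
    (hc' : ¬ ∃ i a b, x' = copyV i a ∧ y' = copyV i b) :
    x = x' ∨ y = y' ∨ G.Adj x y' ∨ G.Adj x' y := by
  have hyh : y ≠ hub := by rintro rfl; simp at hy; omega
  have hyh' : y' ≠ hub := by rintro rfl; simp at hy'; omega
  have hstems : ∀ t s, sq → stemPos (Fintype.card W) t < p → p ≤ stemPos (Fintype.card W) s →
      G.Adj (stem t) (stem s) := fun t s hsq h₁ h₂ =>
    (F.adj_stem_stem t s).2 ⟨hsq, by rintro rfl; omega⟩
  have hlate : ∀ t b, stemPos (Fintype.card W) t < p → p ≤ copyStart (Fintype.card W) t + σ b →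
      ∀ s, ¬ p ≤ stemPos (Fintype.card W) s := fun t b h₁ h₂ s h₃ => by
    have := (eq_two_of_stemPos_lt h₁ h₂ (σ b).is_lt).2
    have := stemPos_le (Fintype.card W) s
    omega
  rcases F.adj_cases h hyh hc with ⟨rfl, t, rfl⟩ | ⟨-, rfl, t, rfl⟩ | ⟨hsq, t, u, rfl, rfl⟩ |
    ⟨t, a, -, rfl, rfl⟩ | ⟨t, a, -, rfl, rfl⟩ <;>
  rcases F.adj_cases h' hyh' hc' with ⟨rfl, s, rfl⟩ | ⟨-, rfl, s, rfl⟩ | ⟨hsq', s, v, rfl, rfl⟩ |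
    ⟨s, b, -, rfl, rfl⟩ | ⟨s, b, -, rfl, rfl⟩ <;>
  simp only [canonKey_hub, canonKey_stem, canonKey_copyV, hr, add_zero] at hx hy hx' hy'
  -- each pair shares an endpoint, is joined through the hub or two stems, or cannot cross together
  · exact Or.inl rfl
  · exact Or.inl rfl
  · exact Or.inr <| Or.inr <| Or.inl <| F.adj_hub_stem v
  · exact (hlate s b hx' hy' t hy).elim
  · exact Or.inr <| Or.inr <| Or.inl <| F.adj_hub_stem s
  · exact Or.inl rfl
  · exact Or.inl rfl
  · exact Or.inr <| Or.inr <| Or.inl <| F.adj_hub_stem v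
  · obtain ⟨rfl, hp⟩ := eq_two_of_stemPos_lt hx' hy' (σ b).is_lt
    obtain rfl := eq_two_of_le_copyStart hp hy
    exact Or.inr <| Or.inr <| Or.inr <| (F.adj_stem_copyV 2 2 r).2 ⟨rfl, F.root_mem⟩
  · exact Or.inr <| Or.inr <| Or.inl <| F.adj_hub_stem s
  · exact Or.inr <| Or.inr <| Or.inr <| F.adj_hub_stem u
  · exact Or.inr <| Or.inr <| Or.inr <| F.adj_hub_stem u
  · exact Or.inr <| Or.inr <| Or.inl <| hstems t v hsq hx hy'
  · exact (hlate s b hx' hy' u hy).elim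
  · exact Or.inr <| Or.inr <| Or.inl <| hstems t s hsq hx hy'
  · exact (hlate t a hx hy s hy').elim
  · obtain ⟨rfl, hp⟩ := eq_two_of_stemPos_lt hx hy (σ a).is_lt
    obtain rfl := eq_two_of_le_copyStart hp hy'
    exact Or.inr <| Or.inr <| Or.inl <| (F.adj_stem_copyV 2 2 r).2 ⟨rfl, F.root_mem⟩
  · exact (hlate t a hx hy v hy').elim
  · obtain ⟨rfl, -⟩ := eq_two_of_stemPos_lt hx hy (σ a).is_lt
    obtain ⟨rfl, -⟩ := eq_two_of_stemPos_lt hx' hy' (σ b).is_lt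
    exact Or.inl rfl
  · exact (hlate t a hx hy s hy').elim
  · exact Or.inr <| Or.inr <| Or.inr <| F.adj_hub_stem t
  · exact Or.inr <| Or.inr <| Or.inr <| F.adj_hub_stem t
  · exact Or.inr <| Or.inr <| Or.inr <| hstems s t hsq' hx' hy
  · exact (hlate s b hx' hy' t hy).elim
  · obtain rfl := eq_of_copyStart_lt hx hy hx' hy'
    exact Or.inr <| Or.inl rfl

lemma mim_cutAt_canonKey_le (F : IsTripleJoin H G r B sq) (hr : (σ r : ℕ) = 0)
    (hmw : mw H σ ≤ k) (p : ℕ) : mim (cutAt G (canonKey σ) p) ≤ k + 1 := by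
  classical
  refine mim_le fun M hM => ?_
  set m := copyAt (Fintype.card W) p
  have hcopy : (M.filter (· ∈ Set.range (Sym2.map (copyV m)))).card ≤ k := by
    have hcut : ∀ a, (σ a : ℕ) < p - copyStart (Fintype.card W) m ↔ canonKey σ (copyV m a) < p :=
      fun a => by simp only [canonKey_copyV]; omega
    calc _ = (M.preimage _ _).card := (Finset.card_preimage _ _ _).symm
      _ ≤ mim (cutGraph H σ (p - copyStart (Fintype.card W) m)) :=
        (hM.comap (cutAtEmbedding (F.copyEmbedding m) hcut)).card_le_mim
      _ ≤ k := (mim_cutGraph_le_mw H σ _).trans hmw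
  have hrest : (M.filter (· ∉ Set.range (Sym2.map (copyV m)))).card ≤ 1 := by
    refine Finset.card_le_one.2 fun e he f hf => ?_
    simp only [Finset.mem_filter] at he hf
    obtain ⟨x, y, rfl, hxy, hx, hy⟩ := exists_eq_of_mem_edgeSet_cutAt (hM.1 he.1)
    obtain ⟨x', y', rfl, hxy', hx', hy'⟩ := exists_eq_of_mem_edgeSet_cutAt (hM.1 hf.1)
    have hnot : ∀ {x y}, canonKey σ x < p → p ≤ canonKey σ y →
        s(x, y) ∉ Set.range (Sym2.map (copyV m)) → ¬ ∃ i a b, x = copyV i a ∧ y = copyV i b := by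
      rintro x y hx hy hxy ⟨i, a, b, rfl, rfl⟩
      obtain rfl := eq_copyAt hx hy (σ b).is_lt
      exact hxy ⟨s(a, b), rfl⟩
    exact hM.eq_of_cutAt he.1 hf.1 hx hy hx' hy' <| F.crossing_edges_conflict hr hxy hxy'
      hx hy hx' hy' (hnot hx hy he.2) (hnot hx' hy' hf.2)
  have := Finset.card_filter_add_card_filter_not (s := M) (· ∈ Set.range (Sym2.map (copyV m)))
  omega

lemma exists_layout_mw_le (F : IsTripleJoin H G r B sq) (hr : (σ r : ℕ) = 0) (hmw : mw H σ ≤ k) :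
    ∃ τ : Tri W ≃ Fin (Fintype.card (Tri W)), (τ hub : ℕ) = 0 ∧ mw G τ ≤ k + 1 := by
  obtain ⟨τ, hτ, hcut⟩ := exists_layout_canonKey σ
  refine ⟨τ, hτ, mw_le fun i => ?_⟩
  obtain ⟨p, hp⟩ := hcut G i
  exact hp ▸ F.mim_cutAt_canonKey_le hr hmw p

lemma succ_le_mw (F : IsTripleJoin H G r B sq) (hH : H.Preconnected)
    (hk : ∀ τ : W ≃ Fin (Fintype.card W), k ≤ mw H τ) (σ : Tri W ≃ Fin (Fintype.card (Tri W))) :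
    k + 1 ≤ mw G σ := by
  rcases Nat.eq_zero_or_pos k with rfl | hk0
  · exact one_le_mw (F.preconnected hH) (by rw [card_tri]; omega) σ
  choose p M hM hcard hrange using
    fun i => exists_cut_isInducedMatching_of_embedding (F.copyEmbedding i) hk0 hk σ
  have hmono := Tuple.monotone_sort p
  set i := Tuple.sort p 0
  set j := Tuple.sort p 1
  set l := Tuple.sort p 2
  have hij : p i ≤ p j := hmono (by decide : (0 : Fin 3) ≤ 1)
  have hjl : p j ≤ p l := hmono (by decide : (1 : Fin 3) ≤ 2)
  have hi : i ≠ j := (Tuple.sort p).injective.ne (by decide)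
  have hl : l ≠ j := (Tuple.sort p).injective.ne (by decide)
  have hil : i ≠ l := (Tuple.sort p).injective.ne (by decide)
  obtain ⟨x₀, y₁, he₀, hpx₀, -⟩ := exists_mem_cross_of_card_pos (hM i) (hk0.trans_le (hcard i))
  obtain ⟨a, rfl⟩ := hrange i _ he₀ x₀ (Sym2.mem_mk_left _ _)
  obtain ⟨x₁, y₀, he₁, -, hpy₀⟩ := exists_mem_cross_of_card_pos (hM l) (hk0.trans_le (hcard l))
  obtain ⟨c, rfl⟩ := hrange l _ he₁ y₀ (Sym2.mem_mk_right _ _)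
  obtain ⟨x, y, hxy, hx, hy, hfar⟩ := F.exists_adj_cross_avoiding hH hi hl hil
    (π := fun v => σ v) (lt_of_lt_of_le hpx₀ hij) (hjl.trans hpy₀)
  have hnew : s(x, y) ∉ M j := fun hmem => by
    obtain ⟨b, hb⟩ := hrange j _ hmem x (Sym2.mem_mk_left _ _)
    exact (hfar b x (Sym2.mem_mk_left _ _)).1 hb.symm
  have hext := (hM j).insert (x := x) (y := y) ⟨hxy, Or.inl ⟨hx, hy⟩⟩ fun e he z hz w hw => by
    obtain ⟨b, rfl⟩ := hrange j e he z hz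
    exact (hfar b w hw).imp id fun h h' => h h'.1
  calc k + 1 ≤ (insert s(x, y) (M j)).card := by
        rw [Finset.card_insert_of_notMem hnew]; exact Nat.succ_le_succ (hcard j)
    _ ≤ mim (cutGraph G σ (p j)) := hext.card_le_mim
    _ ≤ mw G σ := mim_cutGraph_le_mw G σ (p j)

lemma hasRootedLmw (F : IsTripleJoin H G r B sq) (hH : H.Preconnected) (h : HasRootedLmw H r k) :
    HasRootedLmw G hub (k + 1) := by
  obtain ⟨⟨σ, hr, hσ⟩, hlow⟩ := h
  exact ⟨F.exists_layout_mw_le hr hσ, F.succ_le_mw hH hlow⟩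

end IsTripleJoin

lemma graphPow_two_adj (G : SimpleGraph α) {u v : α} :
    (graphPow G 2).Adj u v ↔ u ≠ v ∧ (G.Adj u v ∨ ∃ w, G.Adj u w ∧ G.Adj w v) := by
  change u ≠ v ∧ G.edist u v ≤ ((2 : ℕ) : ℕ∞) ↔ _
  rw [Nat.cast_ofNat, ← not_lt, SimpleGraph.two_lt_edist_iff, Set.eq_empty_iff_forall_notMem]
  simp only [SimpleGraph.mem_commonNeighbors]
  grind [SimpleGraph.Adj.symm]

lemma le_graphPow_two (G : SimpleGraph α) : G ≤ graphPow G 2 :=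
  fun _ _ h => (graphPow_two_adj G).2 ⟨h.ne, Or.inl h⟩

section TriJoin

variable (H : SimpleGraph α) (r : α)

def triJoin : SimpleGraph (Tri α) :=
  SimpleGraph.fromRel fun x y =>
    (∃ i, x = hub ∧ y = stem i) ∨ (∃ i, x = stem i ∧ y = copyV i r) ∨
      ∃ i a b, x = copyV i a ∧ y = copyV i b ∧ H.Adj a b

lemma isTripleJoin_triJoin : IsTripleJoin H (triJoin H r) r (· = r) False where
  adj_hub_stem i := by simp [triJoin]
  adj_stem_stem i j := by simp [triJoin]
  adj_hub_copyV i a := by simp [triJoin]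
  adj_stem_copyV i j a := by simp [triJoin]; grind
  adj_copyV_copyV i j a b := by simp [triJoin, H.adj_comm]; grind [SimpleGraph.Adj.ne]
  root_mem := rfl

lemma isTripleJoin_graphPow_triJoin :
    IsTripleJoin (graphPow H 2) (graphPow (triJoin H r) 2) r (fun a => a = r ∨ H.Adj r a) True := by
  have F := isTripleJoin_triJoin H r
  constructor <;> intros <;>
    simp [graphPow_two_adj, F.adj_hub_stem, F.adj_stem_stem, F.adj_hub_copyV, F.adj_stem_copyV,
      F.adj_copyV_copyV, F.adj_stem_hub, F.adj_copyV_hub, F.adj_copyV_stem, Sum.exists,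
      Prod.exists]
  · tauto
  · grind

end TriJoin

lemma Lgraph_preconnected : ∀ k, (Lgraph k).Preconnected
  | 0 => fun _ _ => .rfl
  | k + 1 => (isTripleJoin_triJoin (Lgraph k) (Lroot k)).preconnected (Lgraph_preconnected k)

lemma hasRootedLmw_Lgraph : ∀ k, HasRootedLmw (Lgraph k) (Lroot k) k ∧
    HasRootedLmw (graphPow (Lgraph k) 2) (Lroot k) k
  | 0 => ⟨hasRootedLmw_of_card_eq_one rfl _ _, hasRootedLmw_of_card_eq_one rfl _ _⟩
  | k + 1 =>
    ⟨(isTripleJoin_triJoin _ _).hasRootedLmw (Lgraph_preconnected k) (hasRootedLmw_Lgraph k).1,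
      (isTripleJoin_graphPow_triJoin _ _).hasRootedLmw
        ((Lgraph_preconnected k).mono (le_graphPow_two _)) (hasRootedLmw_Lgraph k).2⟩

/-- For every `k ≥ 0`, the square of the tree `L k` satisfies
`lmw ((L k)²) = k = lmw (L k)`. -/
theorem lmw_Lgraph_square (k : ℕ) :
    lmw (graphPow (Lgraph k) 2) = k ∧ lmw (Lgraph k) = k :=
  ⟨(hasRootedLmw_Lgraph k).2.lmw_eq, (hasRootedLmw_Lgraph k).1.lmw_eq⟩

end LMW
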